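/- Let R be a ring and n a non-negative integer. Any direct product of n-weak flat right R-modules is n-weak flat; that is, if {M_i}_{i∈I} is a family of n-weak flat right R-modules, then ∏_{i∈I} M_i is n-weak flat. -/

import Mathlib

/-! Definitions for `n`-weak injective and `n`-weak flat modules over an arbitrary
(associative, unital, possibly noncommutative) ring `R`, following
Amini–Amzil–Bennis, "On n-weak injective and n-weak flat modules".

Left `R`-modules are types with `[Module R M]`; right `R`-modules are types with
`[Module Rᵐᵒᵖ M]`.  `Ext` is the derived functor of the ℤ-linear Yoneda functor on
`ModuleCat R`, and `Tor` is obtained as the left derived functor of the balanced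
tensor product `N ⊗_R -` (constructed as a quotient of the ℤ-tensor product). -/

open CategoryTheory Limits TensorProduct

noncomputable section

universe u

namespace NWeak

variable (R : Type u) [Ring R]

/-- A left `R`-module `U` is *`n`-super finitely presented* if it admits a resolution
`⋯ → F_{n+1} → F_n → ⋯ → F_1 → F_0 → U → 0` by projective modules in which `F_i` is
finitely generated for every `i ≥ n`. -/
def IsNSuperFP (n : ℕ) (U : Type u) [AddCommGroup U] [Module R U] : Prop :=
  ∃ (F : ℕ → ModuleCat.{u} R) (d : ∀ i, F (i + 1) ⟶ F i) (ε : F 0 →ₗ[R] U),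
    (∀ i, Module.Projective R (F i)) ∧
    (∀ i, n ≤ i → Module.Finite R (F i)) ∧
    Function.Surjective ε ∧
    Function.Exact (d 0) ε ∧
    (∀ i, Function.Exact (d (i + 1)) (d i))

/-- A left `R`-module `K` is *special super finitely presented* (relative to `n`) if
there are an `n`-super finitely presented module `U` and a resolution
`⋯ → F_{n+1} → F_n → ⋯ → F_0 → U → 0` as above such that `K ≅ Im (F_n → F_{n-1})`,
where for `n = 0` we read `K_{-1} := U`. -/
def IsSpecialSFP (n : ℕ) (K : Type u) [AddCommGroup K] [Module R K] : Prop :=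
  ∃ (F : ℕ → ModuleCat.{u} R) (d : ∀ i, F (i + 1) ⟶ F i) (U : ModuleCat.{u} R)
    (ε : F 0 ⟶ U),
    (∀ i, Module.Projective R (F i)) ∧
    (∀ i, n ≤ i → Module.Finite R (F i)) ∧
    Function.Surjective ε ∧
    Function.Exact (d 0) ε ∧
    (∀ i, Function.Exact (d (i + 1)) (d i)) ∧
    (match n with
      | 0 => Nonempty (K ≃ₗ[R] U)
      | m + 1 => Nonempty (K ≃ₗ[R] LinearMap.range (d m).hom))

/-- Vanishing of `Ext_R^i(K, M)` for left `R`-modules. -/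
def extVanish (i : ℕ) (K : Type u) [AddCommGroup K] [Module R K]
    (M : Type u) [AddCommGroup M] [Module R M] : Prop :=
  Subsingleton (((Ext ℤ (ModuleCat.{u} R) i).obj
    (Opposite.op (ModuleCat.of R K))).obj (ModuleCat.of R M))

/-- A left `R`-module `M` is *`n`-weak injective* if `Ext_R^{n+1}(U, M) = 0` for every
`n`-super finitely presented left `R`-module `U`. -/
def IsNWeakInjective (n : ℕ) (M : Type u) [AddCommGroup M] [Module R M] : Prop :=
  ∀ (U : ModuleCat.{u} R), IsNSuperFP R n U → extVanish R (n + 1) U M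

/-- The left `R`-module `M` has *`n`-weak injective dimension at most `k`* if
`Ext_R^{k+1}(K, M) = 0` for every special super finitely presented left `R`-module
`K`. -/
def WIDimLE (n k : ℕ) (M : Type u) [AddCommGroup M] [Module R M] : Prop :=
  ∀ (K : ModuleCat.{u} R), IsSpecialSFP R n K → extVanish R (k + 1) K M

/-! ### The balanced tensor product and Tor -/

/-- The additive subgroup of `N ⊗[ℤ] K` generated by the balancing relations
`(n·r) ⊗ k - n ⊗ (r·k)`. -/
def balRel (N : Type u) [AddCommGroup N] [Module Rᵐᵒᵖ N]
    (K : Type u) [AddCommGroup K] [Module R K] : AddSubgroup (N ⊗[ℤ] K) :=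
  AddSubgroup.closure
    {x | ∃ (a : N) (r : R) (b : K),
      x = (MulOpposite.op r • a) ⊗ₜ[ℤ] b - a ⊗ₜ[ℤ] (r • b)}

/-- The balanced tensor product `N ⊗_R K` of a right `R`-module `N` and a left
`R`-module `K`, realized as a quotient of `N ⊗[ℤ] K`. -/
def RTensor (N : Type u) [AddCommGroup N] [Module Rᵐᵒᵖ N]
    (K : Type u) [AddCommGroup K] [Module R K] : Type u :=
  (N ⊗[ℤ] K) ⧸ balRel R N K

instance (N : Type u) [AddCommGroup N] [Module Rᵐᵒᵖ N]
    (K : Type u) [AddCommGroup K] [Module R K] : AddCommGroup (RTensor R N K) :=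
  inferInstanceAs (AddCommGroup ((N ⊗[ℤ] K) ⧸ balRel R N K))

variable {R}

/-- Functoriality of the balanced tensor product in the left-module variable. -/
def balMapRight (N : Type u) [AddCommGroup N] [Module Rᵐᵒᵖ N]
    {K K' : Type u} [AddCommGroup K] [Module R K] [AddCommGroup K'] [Module R K']
    (f : K →ₗ[R] K') : RTensor R N K →+ RTensor R N K' :=
  QuotientAddGroup.map _ _
    (TensorProduct.map (LinearMap.id : N →ₗ[ℤ] N) (f.restrictScalars ℤ)).toAddMonoidHom
    (by
      rw [balRel, AddSubgroup.closure_le]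
      rintro x ⟨a, r, b, rfl⟩
      simp only [SetLike.mem_coe, AddSubgroup.mem_comap, LinearMap.toAddMonoidHom_coe,
        map_sub, TensorProduct.map_tmul, LinearMap.coe_restrictScalars, LinearMap.id_coe,
        id_eq, LinearMap.map_smul]
      exact AddSubgroup.subset_closure ⟨a, r, f b, rfl⟩)

/-- Functoriality of the balanced tensor product in the right-module variable. -/
def balMapLeft (K : Type u) [AddCommGroup K] [Module R K]
    {N N' : Type u} [AddCommGroup N] [Module Rᵐᵒᵖ N] [AddCommGroup N'] [Module Rᵐᵒᵖ N']
    (g : N →ₗ[Rᵐᵒᵖ] N') : RTensor R N K →+ RTensor R N' K :=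
  QuotientAddGroup.map _ _
    (TensorProduct.map (g.restrictScalars ℤ) (LinearMap.id : K →ₗ[ℤ] K)).toAddMonoidHom
    (by
      rw [balRel, AddSubgroup.closure_le]
      rintro x ⟨a, r, b, rfl⟩
      simp only [SetLike.mem_coe, AddSubgroup.mem_comap, LinearMap.toAddMonoidHom_coe,
        map_sub, TensorProduct.map_tmul, LinearMap.coe_restrictScalars, LinearMap.id_coe,
        id_eq, LinearMap.map_smul]
      exact AddSubgroup.subset_closure ⟨g a, r, b, rfl⟩)

theorem balMapRight_mk (N : Type u) [AddCommGroup N] [Module Rᵐᵒᵖ N]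
    {K K' : Type u} [AddCommGroup K] [Module R K] [AddCommGroup K'] [Module R K']
    (f : K →ₗ[R] K') (y : N ⊗[ℤ] K) :
    balMapRight N f (QuotientAddGroup.mk y)
      = QuotientAddGroup.mk (TensorProduct.map (LinearMap.id : N →ₗ[ℤ] N)
          (f.restrictScalars ℤ) y) := rfl

variable (R)

/-- The functor `K ↦ N ⊗_R K` from left `R`-modules to abelian groups, for a fixed
right `R`-module `N`. -/
def tensorFunctor (N : Type u) [AddCommGroup N] [Module Rᵐᵒᵖ N] :
    ModuleCat.{u} R ⥤ AddCommGrpCat.{u} where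
  obj K := AddCommGrpCat.of (RTensor R N K)
  map {K K'} f := AddCommGrpCat.ofHom (balMapRight N f.hom)
  map_id K := by
    refine AddCommGrpCat.ext fun x => ?_
    refine QuotientAddGroup.induction_on x fun y => ?_
    show balMapRight N (LinearMap.id) (QuotientAddGroup.mk y) = QuotientAddGroup.mk y
    rw [balMapRight_mk]
    congr 1
    refine TensorProduct.induction_on y (by simp) (fun a b => by simp) ?_
    intro s t hs ht
    simp_all [map_add]
  map_comp {K K' K''} f g := by
    refine AddCommGrpCat.ext fun x => ?_
    refine QuotientAddGroup.induction_on x fun y => ?_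
    show balMapRight N (g.hom.comp f.hom) (QuotientAddGroup.mk y)
      = balMapRight N g.hom (balMapRight N f.hom (QuotientAddGroup.mk y))
    rw [balMapRight_mk, balMapRight_mk, balMapRight_mk]
    congr 1
    refine TensorProduct.induction_on y (by simp) (fun a b => by simp) ?_
    intro s t hs ht
    simp_all [map_add]

instance (N : Type u) [AddCommGroup N] [Module Rᵐᵒᵖ N] : (tensorFunctor R N).Additive where
  map_add {K K'} {f g} := by
    refine AddCommGrpCat.ext fun x => ?_
    refine QuotientAddGroup.induction_on x fun y => ?_
    show balMapRight N (f + g).hom (QuotientAddGroup.mk y)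
      = balMapRight N f.hom (QuotientAddGroup.mk y) + balMapRight N g.hom (QuotientAddGroup.mk y)
    rw [balMapRight_mk, balMapRight_mk, balMapRight_mk]
    refine Eq.trans ?_ (QuotientAddGroup.mk_add (N := balRel R N K') _ _)
    congr 1
    refine TensorProduct.induction_on y (by simp)
      (fun a b => by
        simp only [TensorProduct.map_tmul, LinearMap.coe_restrictScalars, LinearMap.id_coe, id_eq]
        rw [show (f + g).hom b = f.hom b + g.hom b from rfl, TensorProduct.tmul_add]) ?_
    intro s t hs ht
    simp_all [map_add]
    abel

/-- Vanishing of `Tor_i^R(N, K)` for a right `R`-module `N` and a left `R`-module `K`: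
the `i`-th left derived functor of `N ⊗_R -` vanishes at `K`. -/
def torVanish (i : ℕ) (N : Type u) [AddCommGroup N] [Module Rᵐᵒᵖ N]
    (K : Type u) [AddCommGroup K] [Module R K] : Prop :=
  Subsingleton (((tensorFunctor R N).leftDerived i).obj (ModuleCat.of R K))

/-- A right `R`-module `N` is *`n`-weak flat* if `Tor^R_{n+1}(N, U) = 0` for every
`n`-super finitely presented left `R`-module `U`. -/
def IsNWeakFlat (n : ℕ) (N : Type u) [AddCommGroup N] [Module Rᵐᵒᵖ N] : Prop :=
  ∀ (U : ModuleCat.{u} R), IsNSuperFP R n U → torVanish R (n + 1) N U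

/-- The right `R`-module `N` has *`n`-weak flat dimension at most `k`* if
`Tor^R_{k+1}(N, K) = 0` for every special super finitely presented left `R`-module
`K`. -/
def WFDimLE (n k : ℕ) (N : Type u) [AddCommGroup N] [Module Rᵐᵒᵖ N] : Prop :=
  ∀ (K : ModuleCat.{u} R), IsSpecialSFP R n K → torVanish R (k + 1) N K

/-! ### Character modules -/

/-- The character module `M⋆ = Hom_ℤ(M, ℚ/ℤ)` of a left `R`-module is a right
`R`-module via `(f · r) (m) = f (r · m)`. -/
instance charModuleRight (M : Type u) [AddCommGroup M] [Module R M] :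
    Module Rᵐᵒᵖ (CharacterModule M) where
  smul ρ f := f.comp (DistribMulAction.toAddMonoidHom M ρ.unop)
  one_smul f := CharacterModule.ext _ fun m => congrArg f (one_smul R m)
  mul_smul ρ σ f := CharacterModule.ext _ fun m => congrArg f (mul_smul σ.unop ρ.unop m)
  smul_zero ρ := CharacterModule.ext _ fun _ => rfl
  smul_add ρ f g := CharacterModule.ext _ fun _ => rfl
  add_smul ρ σ f := CharacterModule.ext _ fun m => by
    show f ((ρ.unop + σ.unop) • m) = f (ρ.unop • m) + f (σ.unop • m)
    rw [add_smul, map_add]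
  zero_smul f := CharacterModule.ext _ fun m => by
    show f ((0 : R) • m) = 0
    rw [zero_smul, map_zero]

/-- The character module `N⋆ = Hom_ℤ(N, ℚ/ℤ)` of a right `R`-module is a left
`R`-module via `(r · f) (m) = f (m · r)`. -/
instance charModuleLeft (N : Type u) [AddCommGroup N] [Module Rᵐᵒᵖ N] :
    Module R (CharacterModule N) where
  smul r f := f.comp (DistribMulAction.toAddMonoidHom N (MulOpposite.op r))
  one_smul f := CharacterModule.ext _ fun m => congrArg f (one_smul Rᵐᵒᵖ m)
  mul_smul r s f := CharacterModule.ext _ fun m => congrArg f (by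
    show (MulOpposite.op (r * s)) • m = (MulOpposite.op s) • (MulOpposite.op r) • m
    rw [← mul_smul, MulOpposite.op_mul])
  smul_zero r := CharacterModule.ext _ fun _ => rfl
  smul_add r f g := CharacterModule.ext _ fun _ => rfl
  add_smul r s f := CharacterModule.ext _ fun m => by
    show f ((MulOpposite.op r + MulOpposite.op s) • m)
      = f ((MulOpposite.op r) • m) + f ((MulOpposite.op s) • m)
    rw [add_smul, map_add]
  zero_smul f := CharacterModule.ext _ fun m => by
    show f ((0 : Rᵐᵒᵖ) • m) = 0
    rw [zero_smul, map_zero]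

/-! ### Purity and flatness -/

/-- A submodule `N` of a left `R`-module `M` is *pure* if for every right `R`-module
`L` the induced map `L ⊗_R N → L ⊗_R M` is injective. -/
def IsPureSubmodule (M : Type u) [AddCommGroup M] [Module R M] (N : Submodule R M) :
    Prop :=
  ∀ (L : Type u) [AddCommGroup L] [Module Rᵐᵒᵖ L],
    Function.Injective (balMapRight L N.subtype)

/-- A submodule `N` of a right `R`-module `M` is *pure* if for every left `R`-module
`L` the induced map `N ⊗_R L → M ⊗_R L` is injective. -/
def IsPureSubmoduleRight (M : Type u) [AddCommGroup M] [Module Rᵐᵒᵖ M]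
    (N : Submodule Rᵐᵒᵖ M) : Prop :=
  ∀ (L : Type u) [AddCommGroup L] [Module R L],
    Function.Injective (balMapLeft L N.subtype)

/-- A left `R`-module `M` is *flat* if tensoring with `M` preserves injectivity of
maps of right `R`-modules. -/
def IsFlatLeft (M : Type u) [AddCommGroup M] [Module R M] : Prop :=
  ∀ (A B : Type u) [AddCommGroup A] [Module Rᵐᵒᵖ A] [AddCommGroup B] [Module Rᵐᵒᵖ B]
    (g : A →ₗ[Rᵐᵒᵖ] B), Function.Injective g → Function.Injective (balMapLeft M g)

/-- The left `R`-module `K` has *projective dimension at most `m`*: there is an exact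
sequence `0 → P_m → ⋯ → P_1 → P_0 → K → 0` with all `P_i` projective (encoded by a
projective resolution vanishing in degrees `> m`). -/
def ProjDimLE (K : Type u) [AddCommGroup K] [Module R K] (m : ℕ) : Prop :=
  ∃ (P : ℕ → ModuleCat.{u} R) (d : ∀ i, P (i + 1) ⟶ P i) (ε : P 0 →ₗ[R] K),
    (∀ i, Module.Projective R (P i)) ∧
    Function.Surjective ε ∧
    Function.Exact (d 0) ε ∧
    (∀ i, Function.Exact (d (i + 1)) (d i)) ∧
    (∀ i, m < i → Subsingleton (P i))

end NWeak

/-!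
Compute `Tor` from the given resolution `F` of `U`, in which `F n`, `F (n + 1)` and `F (n + 2)`
are finitely generated projective. For such a module `K` the canonical map
`(∏ i, M i) ⊗_R K → ∏ i, (M i ⊗_R K)` is bijective: for `K = R^m` both sides are
`(∏ i, M i)^m`, and a direct summand of `R^m` inherits bijectivity by naturality. So in degrees
`n`, `n + 1`, `n + 2` the complex `(∏ i, M i) ⊗_R F` is isomorphic to `∏ i, (M i ⊗_R F)`, whose
exactness at `n + 1` is checked componentwise.
-/

theorem Function.Exact.piMap {ι : Type*} {A B C : ι → Type*} [∀ i, Zero (C i)]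
    {f : ∀ i, A i → B i} {g : ∀ i, B i → C i} (h : ∀ i, Function.Exact (f i) (g i)) :
    Function.Exact (Pi.map f) (Pi.map g) := by
  intro x
  simp only [funext_iff, Pi.map_apply, Pi.zero_apply, h _ _, Set.range_piMap, Set.mem_univ_pi]

theorem Function.Bijective.of_retract {α β α' β' : Type*} {θ : α → β} {θ' : α' → β'}
    {s : α → α'} {p : α' → α} {s' : β → β'} {p' : β' → β}
    (hps : Function.LeftInverse p s) (hps' : Function.LeftInverse p' s')
    (hs : θ' ∘ s = s' ∘ θ) (hp : θ ∘ p = p' ∘ θ') (h : Function.Bijective θ') :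
    Function.Bijective θ := by
  refine ⟨fun x y hxy => ?_, fun b => ?_⟩
  · refine hps.injective (h.1 ?_)
    change (θ' ∘ s) x = (θ' ∘ s) y
    rw [hs, Function.comp_apply, Function.comp_apply, hxy]
  · obtain ⟨a, ha⟩ := h.2 (s' b)
    exact ⟨p a, (congrFun hp a).trans (by rw [Function.comp_apply, ha, hps' b])⟩

namespace NWeak

variable {R : Type u} [Ring R]

namespace RTensor

variable {N : Type u} [AddCommGroup N] [Module Rᵐᵒᵖ N] {K : Type u} [AddCommGroup K] [Module R K]

variable (R) in
def tmul (a : N) (b : K) : RTensor R N K := QuotientAddGroup.mk (a ⊗ₜ[ℤ] b)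

@[elab_as_elim]
theorem induction_on {p : RTensor R N K → Prop} (x : RTensor R N K)
    (zero : p 0) (tmul : ∀ a b, p (RTensor.tmul R a b)) (add : ∀ x y, p x → p y → p (x + y)) : p x :=
  QuotientAddGroup.induction_on x fun y =>
    TensorProduct.induction_on y zero tmul fun _ _ => add _ _

theorem op_smul_tmul (r : R) (a : N) (b : K) :
    tmul R (MulOpposite.op r • a) b = tmul R a (r • b) :=
  QuotientAddGroup.eq_iff_sub_mem.mpr (AddSubgroup.subset_closure ⟨a, r, b, rfl⟩)

@[simp]
theorem zero_tmul (b : K) : tmul R (0 : N) b = 0 := by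
  rw [tmul, TensorProduct.zero_tmul]; rfl

theorem add_tmul (a a' : N) (b : K) : tmul R (a + a') b = tmul R a b + tmul R a' b := by
  rw [tmul, TensorProduct.add_tmul]; rfl

theorem tmul_sum {κ : Type*} (s : Finset κ) (a : N) (b : κ → K) :
    tmul R a (∑ j ∈ s, b j) = ∑ j ∈ s, tmul R a (b j) := by
  rw [tmul, TensorProduct.tmul_sum]
  exact map_sum (QuotientAddGroup.mk' (balRel R N K)) _ _

end RTensor

section Functoriality

variable {N N' : Type u} [AddCommGroup N] [Module Rᵐᵒᵖ N] [AddCommGroup N'] [Module Rᵐᵒᵖ N']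
  {K K' K'' : Type u} [AddCommGroup K] [Module R K] [AddCommGroup K'] [Module R K']
  [AddCommGroup K''] [Module R K'']

theorem balMapRight_id (x : RTensor R N K) : balMapRight N LinearMap.id x = x := by
  induction x using RTensor.induction_on with
  | zero => exact map_zero _
  | tmul => rfl
  | add x y hx hy => rw [map_add, hx, hy]

theorem balMapRight_comp (f : K →ₗ[R] K') (g : K' →ₗ[R] K'') (x : RTensor R N K) :
    balMapRight N (g ∘ₗ f) x = balMapRight N g (balMapRight N f x) := by
  induction x using RTensor.induction_on with
  | zero => simp only [map_zero]
  | tmul => rfl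
  | add x y hx hy => rw [map_add, map_add, map_add, hx, hy]

theorem balMapLeft_balMapRight (g : N →ₗ[Rᵐᵒᵖ] N') (f : K →ₗ[R] K') (x : RTensor R N K) :
    balMapLeft K' g (balMapRight N f x) = balMapRight N' f (balMapLeft K g x) := by
  induction x using RTensor.induction_on with
  | zero => simp only [map_zero]
  | tmul => rfl
  | add x y hx hy => rw [map_add, map_add, map_add, map_add, hx, hy]

end Functoriality

section FreeModule

variable (R) (N : Type u) [AddCommGroup N] [Module Rᵐᵒᵖ N] (m : ℕ)

def finTensorToPi : RTensor R N (Fin m → R) →+ (Fin m → N) :=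
  QuotientAddGroup.lift _
    (TensorProduct.lift <| LinearMap.mk₂ ℤ
      (fun (a : N) (b : Fin m → R) j => MulOpposite.op (b j) • a)
      (fun _ _ _ => funext fun _ => smul_add _ _ _)
      (fun z a _ => funext fun _ => smul_comm _ z a)
      (fun _ _ _ => funext fun _ => add_smul _ _ _)
      (fun z _ b => funext fun j => by
        rw [Pi.smul_apply, Pi.smul_apply, MulOpposite.op_smul, smul_assoc])).toAddMonoidHom
    (AddSubgroup.closure_le _ |>.mpr <| by
      rintro _ ⟨a, r, b, rfl⟩
      simp [mul_smul])

@[simp]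
theorem finTensorToPi_tmul (a : N) (b : Fin m → R) :
    finTensorToPi R N m (RTensor.tmul R a b) = fun j => MulOpposite.op (b j) • a := rfl

def finTensorEquiv : RTensor R N (Fin m → R) ≃+ (Fin m → N) where
  toFun := finTensorToPi R N m
  invFun v := ∑ j, RTensor.tmul R (v j) (Pi.single j 1)
  left_inv x := by
    induction x using RTensor.induction_on with
    | zero => simp
    | tmul a b =>
      dsimp only
      simp only [finTensorToPi_tmul, RTensor.op_smul_tmul, ← RTensor.tmul_sum]
      congr 1
      ext k
      simp [Pi.single_apply]
    | add x y hx hy =>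
      simp only [map_add, Pi.add_apply, RTensor.add_tmul, Finset.sum_add_distrib, hx, hy]
  right_inv v := by
    funext k
    simp [map_sum, Pi.single_apply, apply_ite MulOpposite.op]
  map_add' := map_add _

end FreeModule

theorem finTensorToPi_balMapLeft {N N' : Type u} [AddCommGroup N] [Module Rᵐᵒᵖ N]
    [AddCommGroup N'] [Module Rᵐᵒᵖ N'] (m : ℕ) (g : N →ₗ[Rᵐᵒᵖ] N')
    (x : RTensor R N (Fin m → R)) (j : Fin m) :
    finTensorToPi R N' m (balMapLeft _ g x) j = g (finTensorToPi R N m x j) := by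
  induction x using RTensor.induction_on with
  | zero => simp
  | tmul a b => exact (g.map_smul _ a).symm
  | add x y hx hy => simp [hx, hy]

section Comparison

variable (R) {ι : Type u} (M : ι → Type u) [∀ i, AddCommGroup (M i)] [∀ i, Module Rᵐᵒᵖ (M i)]
  (K : Type u) [AddCommGroup K] [Module R K]

def piTensorComparison : RTensor R (∀ i, M i) K →+ ∀ i, RTensor R (M i) K :=
  AddMonoidHom.pi fun i => balMapLeft K (LinearMap.proj i)

variable {K}

theorem piTensorComparison_comp_balMapRight {K' : Type u} [AddCommGroup K'] [Module R K']
    (f : K →ₗ[R] K') :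
    (AddMonoidHom.piMap fun i => balMapRight (M i) f).comp (piTensorComparison R M K) =
      (piTensorComparison R M K').comp (balMapRight _ f) := by
  ext x i
  exact (balMapLeft_balMapRight _ f x).symm

theorem piTensorComparison_bijective_of_fin (m : ℕ) :
    Function.Bijective (piTensorComparison R M (Fin m → R)) := by
  let e := AddEquiv.piCongrRight fun i : ι => finTensorEquiv R (M i) m
  have h : ⇑(piTensorComparison R M (Fin m → R)) =
      e.symm ∘ Equiv.piComm (fun (_ : Fin m) i => M i) ∘ finTensorEquiv R (∀ i, M i) m := by
    funext x
    apply e.injective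
    rw [Function.comp_apply, Function.comp_apply, AddEquiv.apply_symm_apply]
    funext i j
    exact finTensorToPi_balMapLeft (N' := M i) m (LinearMap.proj i) x j
  rw [h]
  exact e.symm.bijective.comp ((Equiv.bijective _).comp (AddEquiv.bijective _))

theorem piTensorComparison_bijective [Module.Finite R K] [Module.Projective R K] :
    Function.Bijective (piTensorComparison R M K) := by
  obtain ⟨m, p, hp⟩ := Module.Finite.exists_fin' R K
  obtain ⟨s, hs⟩ := Module.projective_lifting_property p LinearMap.id hp
  have retract (N : Type u) [AddCommGroup N] [Module Rᵐᵒᵖ N] :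
      Function.LeftInverse (balMapRight N p) (balMapRight N s) := fun x => by
    rw [← balMapRight_comp, hs, balMapRight_id]
  exact (piTensorComparison_bijective_of_fin R M m).of_retract
    (s' := Pi.map fun i => balMapRight (M i) s) (p' := Pi.map fun i => balMapRight (M i) p)
    (retract _) (fun y => funext fun i => retract (M i) (y i))
    (congrArg DFunLike.coe (piTensorComparison_comp_balMapRight R M s)).symm
    (congrArg DFunLike.coe (piTensorComparison_comp_balMapRight R M p)).symm

theorem exact_balMapRight_pi {K₁ K₂ K₃ : Type u} [AddCommGroup K₁] [Module R K₁]
    [AddCommGroup K₂] [Module R K₂] [AddCommGroup K₃] [Module R K₃]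
    [Module.Finite R K₁] [Module.Projective R K₁] [Module.Finite R K₂] [Module.Projective R K₂]
    [Module.Finite R K₃] [Module.Projective R K₃] (f : K₁ →ₗ[R] K₂) (g : K₂ →ₗ[R] K₃)
    (h : ∀ i, Function.Exact (balMapRight (M i) f) (balMapRight (M i) g)) :
    Function.Exact (balMapRight (∀ i, M i) f) (balMapRight (∀ i, M i) g) :=
  (AddMonoidHom.exact_iff_of_surjective_of_bijective_of_injective _ _ _ _ _ _ _
    (piTensorComparison_comp_balMapRight R M f) (piTensorComparison_comp_balMapRight R M g)
    (piTensorComparison_bijective R M).2 (piTensorComparison_bijective R M)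
    (piTensorComparison_bijective R M).1).2 (Function.Exact.piMap h)

end Comparison

section Resolution

variable {U : Type u} [AddCommGroup U] [Module R U] {F : ℕ → ModuleCat.{u} R}
  {d : ∀ i, F (i + 1) ⟶ F i} {ε : F 0 →ₗ[R] U}

variable (d) in
def resolutionComplex (hd : ∀ i, Function.Exact (d (i + 1)) (d i)) :
    ChainComplex (ModuleCat.{u} R) ℕ :=
  ChainComplex.of F d fun i => by ext x; exact (hd i).apply_apply_eq_zero x

theorem resolutionComplex_d (hd : ∀ i, Function.Exact (d (i + 1)) (d i)) (i : ℕ) :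
    (resolutionComplex d hd).d (i + 1) i = d i :=
  ChainComplex.of_d _ _ i

theorem resolutionComplex_exactAt_succ (hd : ∀ i, Function.Exact (d (i + 1)) (d i)) (k : ℕ) :
    (resolutionComplex d hd).ExactAt (k + 1) := by
  rw [HomologicalComplex.exactAt_iff' _ (k + 1 + 1) (k + 1) k (by simp) (by simp),
    ShortComplex.moduleCat_exact_iff_range_eq_ker, eq_comm, ← LinearMap.exact_iff]
  simp only [HomologicalComplex.shortComplexFunctor'_obj_f,
    HomologicalComplex.shortComplexFunctor'_obj_g, resolutionComplex_d]
  exact hd k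

def projectiveResolutionOfExact (hproj : ∀ i, Module.Projective R (F i))
    (hε : Function.Surjective ε) (h0 : Function.Exact (d 0) ε)
    (hd : ∀ i, Function.Exact (d (i + 1)) (d i)) : ProjectiveResolution (ModuleCat.of R U) where
  complex := resolutionComplex d hd
  projective i := (IsProjective.iff_projective (F i)).mp (hproj i)
  π := (ChainComplex.toSingle₀Equiv _ _).symm ⟨ModuleCat.ofHom ε, by
    ext x
    rw [resolutionComplex_d]
    exact h0.apply_apply_eq_zero x⟩
  quasiIso := ⟨fun i => by
    cases i with
    | zero =>
      rw [ChainComplex.quasiIsoAt₀_iff, ShortComplex.quasiIso_iff_of_zeros' _ rfl rfl rfl,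
        ShortComplex.moduleCat_exact_iff_range_eq_ker, eq_comm, ← LinearMap.exact_iff,
        ModuleCat.epi_iff_surjective]
      exact ⟨h0, hε⟩
    | succ k =>
      rw [quasiIsoAt_iff_exactAt' (hL := ChainComplex.exactAt_succ_single_obj ..)]
      exact resolutionComplex_exactAt_succ hd k⟩

theorem torVanish_succ_iff_exact (N : Type u) [AddCommGroup N] [Module Rᵐᵒᵖ N]
    (hproj : ∀ i, Module.Projective R (F i)) (hε : Function.Surjective ε)
    (h0 : Function.Exact (d 0) ε) (hd : ∀ i, Function.Exact (d (i + 1)) (d i)) (k : ℕ) :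
    torVanish R (k + 1) N U ↔
      Function.Exact (balMapRight N (d (k + 1)).hom) (balMapRight N (d k).hom) := by
  rw [torVanish, ← AddCommGrpCat.isZero_iff_subsingleton,
    ((projectiveResolutionOfExact hproj hε h0 hd).isoLeftDerivedObj _ (k + 1)).isZero_iff,
    HomologicalComplex.homologyFunctor_obj, ← HomologicalComplex.exactAt_iff_isZero_homology,
    HomologicalComplex.exactAt_iff' _ (k + 1 + 1) (k + 1) k (by simp) (by simp),
    ShortComplex.ab_exact_iff_function_exact]
  simp only [HomologicalComplex.shortComplexFunctor'_obj_f,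
    HomologicalComplex.shortComplexFunctor'_obj_g, Functor.mapHomologicalComplex_obj_d]
  dsimp only [projectiveResolutionOfExact]
  rw [resolutionComplex_d, resolutionComplex_d]
  rfl

end Resolution

end NWeak

open NWeak in
/-- Any direct product of `n`-weak flat right `R`-modules is
`n`-weak flat. -/
theorem pi_isNWeakFlat
    (R : Type u) [Ring R] (n : ℕ) (ι : Type u) (M : ι → Type u)
    [∀ i, AddCommGroup (M i)] [∀ i, Module Rᵐᵒᵖ (M i)]
    (h : ∀ i, IsNWeakFlat R n (M i)) :
    IsNWeakFlat R n (∀ i, M i) := by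
  intro U hU
  have ⟨F, d, ε, hproj, hfin, hε, h0, hd⟩ := hU
  have := hfin n le_rfl
  have := hfin (n + 1) (by omega)
  have := hfin (n + 2) (by omega)
  have := hproj n
  have := hproj (n + 1)
  have := hproj (n + 2)
  rw [torVanish_succ_iff_exact _ hproj hε h0 hd]
  exact exact_balMapRight_pi R M _ _ fun i =>
    (torVanish_succ_iff_exact _ hproj hε h0 hd n).mp (h i U hU)
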